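/- arXiv:2510.18258 — 2 statements merged into one kernel-verified Lean document; each statement's English description precedes it below -/
import Mathlib

section
/- Let p, n be positive integers, let f : Fin n → (EuclideanSpace ℝ (Fin p) → ℝ) be a family of differentiable functions (f i θ is the network output on the i-th data point at parameters θ), and let y : Fin n → ℝ be labels. Define the loss L(θ) = Σ_{i} (1/2)·(f i θ − y i)². Suppose θ : ℝ → EuclideanSpace ℝ (Fin p) is differentiable and satisfies the gradient-flow equation θ'(t) = −∇L(θ(t)) for all t ∈ ℝ. Then for every j : Fin n and every t ∈ ℝ, the map t ↦ f j (θ(t)) is differentiable at t with derivative d/dt [f j (θ(t))] = − Σ_{i} ⟨∇(f j)(θ(t)), ∇(f i)(θ(t))⟩ · (f i (θ(t)) − y i). Equivalently, writing O(t) = (f i (θ(t)))_{i} and K(t) the matrix with entries K_{uv}(t) = ⟨∇(f u)(θ(t)), ∇(f v)(θ(t))⟩, one has O'(t) = −K(t)·(O(t) − y). -/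
/-!
By the chain rule, `d/dt f_j(θ t) = ⟪∇f_j, θ'⟫ = -⟪∇f_j, ∇L⟫`, and the gradient of the squared
loss is `∇L = ∑ᵢ (fᵢ - yᵢ) ∇fᵢ`; expanding the inner product yields the NTK entries.
-/

open scoped RealInnerProductSpace

theorem hasDerivAt_half_sq_sub (c u : ℝ) :
    HasDerivAt (fun v : ℝ => 1 / 2 * (v - c) ^ 2) (u - c) u := by
  simpa using (((hasDerivAt_id u).sub_const c).pow 2).const_mul (1 / 2 : ℝ)

noncomputable def squaredLoss {X ι : Type*} [Fintype ι] (f : ι → X → ℝ) (y : ι → ℝ) (w : X) : ℝ :=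
  ∑ i, 1 / 2 * (f i w - y i) ^ 2

section Gradient

variable {F : Type*} [NormedAddCommGroup F] [InnerProductSpace ℝ F] [CompleteSpace F]

theorem HasGradientAt.comp_hasDerivAt_inner {g : F → ℝ} {g' : F} {γ : ℝ → F} {γ' : F} {t : ℝ}
    (hg : HasGradientAt g g' (γ t)) (hγ : HasDerivAt γ γ' t) :
    HasDerivAt (fun s => g (γ s)) ⟪g', γ'⟫ t :=
  hg.hasFDerivAt.comp_hasDerivAt t hγ

theorem HasDerivAt.comp_hasGradientAt {h : ℝ → ℝ} {h' : ℝ} {g : F → ℝ} {g' : F} {x : F}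
    (hh : HasDerivAt h h' (g x)) (hg : HasGradientAt g g' x) :
    HasGradientAt (fun w => h (g w)) (h' • g') x := by
  rw [hasGradientAt_iff_hasFDerivAt, map_smul]
  exact hh.comp_hasFDerivAt x hg.hasFDerivAt

theorem HasGradientAt.fun_sum {ι : Type*} {s : Finset ι} {g : ι → F → ℝ} {g' : ι → F} {x : F}
    (hg : ∀ i ∈ s, HasGradientAt (g i) (g' i) x) :
    HasGradientAt (fun w => ∑ i ∈ s, g i w) (∑ i ∈ s, g' i) x := by
  rw [hasGradientAt_iff_hasFDerivAt, map_sum]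
  exact HasFDerivAt.fun_sum fun i hi => (hg i hi).hasFDerivAt

theorem hasGradientAt_squaredLoss {ι : Type*} [Fintype ι] {f : ι → F → ℝ} (y : ι → ℝ) {x : F}
    (hf : ∀ i, DifferentiableAt ℝ (f i) x) :
    HasGradientAt (squaredLoss f y) (∑ i, (f i x - y i) • gradient (f i) x) x :=
  HasGradientAt.fun_sum fun i _ =>
    (hasDerivAt_half_sq_sub (y i) (f i x)).comp_hasGradientAt (hf i).hasGradientAt

end Gradient

theorem ntk_gradient_flow_evolution_general
    (p n : ℕ)
    (f : Fin n → EuclideanSpace ℝ (Fin p) → ℝ)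
    (hf : ∀ i, Differentiable ℝ (f i))
    (y : Fin n → ℝ)
    (θ : ℝ → EuclideanSpace ℝ (Fin p))
    (hθ : Differentiable ℝ θ)
    (hflow : ∀ t : ℝ, deriv θ t =
      -gradient (fun w => ∑ i, (1 / 2 : ℝ) * (f i w - y i) ^ 2) (θ t))
    (j : Fin n) (t : ℝ) :
    HasDerivAt (fun s => f j (θ s))
      (-∑ i, ⟪gradient (f j) (θ t), gradient (f i) (θ t)⟫ * (f i (θ t) - y i)) t := by
  have hθt : HasDerivAt θ (-gradient (squaredLoss f y) (θ t)) t := hflow t ▸ (hθ t).hasDerivAt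
  have hgradL := hasGradientAt_squaredLoss y fun i => hf i (θ t)
  have hout := (hf j (θ t)).hasGradientAt.comp_hasDerivAt_inner hθt
  rw [hgradL.gradient, inner_neg_right, inner_sum] at hout
  simpa only [inner_smul_right, mul_comm] using hout

/-- Theorem 3.1 (NTK evolution under gradient flow, single task):
along a gradient-flow trajectory for the squared loss, the output on each data
point evolves according to the NTK matrix. -/
theorem ntk_gradient_flow_evolution
    (p n : ℕ) (hp : 0 < p) (hn : 0 < n)
    (f : Fin n → EuclideanSpace ℝ (Fin p) → ℝ)
    (hf : ∀ i, Differentiable ℝ (f i))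
    (y : Fin n → ℝ)
    (θ : ℝ → EuclideanSpace ℝ (Fin p))
    (hθ : Differentiable ℝ θ)
    (hflow : ∀ t : ℝ, deriv θ t =
      -gradient (fun w => ∑ i, (1 / 2 : ℝ) * (f i w - y i) ^ 2) (θ t))
    (j : Fin n) (t : ℝ) :
    HasDerivAt (fun s => f j (θ s))
      (-∑ i, ⟪gradient (f j) (θ t), gradient (f i) (θ t)⟫ * (f i (θ t) - y i)) t :=
  ntk_gradient_flow_evolution_general p n f hf y θ hθ hflow j t
end

section
/- Let p, k, n be positive integers. For each task i : Fin k and data point u : Fin n, let f i u : EuclideanSpace ℝ (Fin p) → ℝ be a differentiable function, let y : Fin k → Fin n → ℝ be labels, and let ω : Fin k → ℝ be task weights. Define the weighted multi-task loss L(θ) = Σ_{i} ω i · Σ_{u} (1/2)·(f i u θ − y i u)². Suppose θ : ℝ → EuclideanSpace ℝ (Fin p) is differentiable and satisfies θ'(t) = −∇L(θ(t)) for all t ∈ ℝ. Then for every task j : Fin k, data point v : Fin n, and t ∈ ℝ, the map t ↦ ω j · f j v (θ(t)) is differentiable at t with derivative d/dt [ω j · f j v (θ(t))] = − Σ_{i}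 Σ_{u} ω j · ω i · ⟨∇(f j v)(θ(t)), ∇(f i u)(θ(t))⟩ · (f i u (θ(t)) − y i u). -/
/-!
Along the flow `θ' = -∇L`, the chain rule gives `d/dt g (θ t) = -⟪∇g, ∇L⟫` for every
differentiable output `g`. Since `∇L = ∑ i, ω i • ∑ u, (f i u - y i u) • ∇(f i u)`, bilinearity of
the inner product expands this into the weighted extended NTK sum.
-/

open scoped RealInnerProductSpace

section GradientCalculus

variable {F : Type*} [NormedAddCommGroup F] [InnerProductSpace ℝ F] [CompleteSpace F]
  {g : F → ℝ} {g' x : F}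

theorem HasGradientAt.const_mul (c : ℝ) (h : HasGradientAt g g' x) :
    HasGradientAt (fun w => c * g w) (c • g') x := by
  rw [hasGradientAt_iff_hasFDerivAt, map_smul]
  exact h.hasFDerivAt.const_mul c

theorem HasGradientAt.sum {ι : Type*} (s : Finset ι) {g : ι → F → ℝ} {g' : ι → F}
    (h : ∀ i ∈ s, HasGradientAt (g i) (g' i) x) :
    HasGradientAt (fun w => ∑ i ∈ s, g i w) (∑ i ∈ s, g' i) x := by
  rw [hasGradientAt_iff_hasFDerivAt, map_sum]
  exact HasFDerivAt.fun_sum fun i hi => (h i hi).hasFDerivAt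

theorem HasGradientAt.half_sq_sub_const (c : ℝ) (h : HasGradientAt g g' x) :
    HasGradientAt (fun w => (1 / 2 : ℝ) * (g w - c) ^ 2) ((g x - c) • g') x := by
  rw [hasGradientAt_iff_hasFDerivAt, map_smul]
  refine (((h.hasFDerivAt.sub_const c).pow 2).const_mul (1 / 2 : ℝ)).congr_fderiv ?_
  rw [smul_smul, nsmul_eq_mul, Nat.cast_ofNat, pow_one, one_div,
    inv_mul_cancel_left₀ two_ne_zero]

theorem hasGradientAt_weighted_sum_sq_loss {ι α : Type*} [Fintype ι] [Fintype α]
    {f : ι → α → F → ℝ} (hf : ∀ i u, DifferentiableAt ℝ (f i u) x) (y : ι → α → ℝ)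
    (ω : ι → ℝ) :
    HasGradientAt (fun w => ∑ i, ω i * ∑ u, (1 / 2 : ℝ) * (f i u w - y i u) ^ 2)
      (∑ i, ω i • ∑ u, (f i u x - y i u) • gradient (f i u) x) x :=
  HasGradientAt.sum _ fun i _ => (HasGradientAt.sum _ fun u _ =>
    (hf i u).hasGradientAt.half_sq_sub_const (y i u)).const_mul (ω i)

theorem hasDerivAt_comp_of_gradient_flow {L : F → ℝ} {θ : ℝ → F} {t : ℝ}
    (hg : DifferentiableAt ℝ g (θ t)) (hθ : DifferentiableAt ℝ θ t)
    (hflow : deriv θ t = -gradient L (θ t)) :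
    HasDerivAt (fun s => g (θ s)) (-⟪gradient g (θ t), gradient L (θ t)⟫) t := by
  have := hg.hasFDerivAt.comp_hasDerivAt t hθ.hasDerivAt
  rwa [hflow, ← inner_gradient_left, inner_neg_right] at this

end GradientCalculus

theorem ntk_mtl_weighted_gradient_flow_evolution_general
    (p k n : ℕ)
    (f : Fin k → Fin n → EuclideanSpace ℝ (Fin p) → ℝ)
    (hf : ∀ i u, Differentiable ℝ (f i u))
    (y : Fin k → Fin n → ℝ)
    (ω : Fin k → ℝ)
    (θ : ℝ → EuclideanSpace ℝ (Fin p))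
    (hθ : Differentiable ℝ θ)
    (hflow : ∀ t : ℝ, deriv θ t =
      -gradient (fun w => ∑ i, ω i * ∑ u, (1 / 2 : ℝ) * (f i u w - y i u) ^ 2) (θ t))
    (j : Fin k) (v : Fin n) (t : ℝ) :
    HasDerivAt (fun s => ω j * f j v (θ s))
      (-∑ i, ∑ u,
        ω j * ω i * ⟪gradient (f j v) (θ t), gradient (f i u) (θ t)⟫
          * (f i u (θ t) - y i u)) t := by
  have hL := hasGradientAt_weighted_sum_sq_loss (fun i u => (hf i u) (θ t)) y ω
  have hout := (hasDerivAt_comp_of_gradient_flow (hf j v (θ t)) (hθ t) (hflow t)).const_mul (ω j)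
  rw [hL.gradient] at hout
  refine hout.congr_deriv ?_
  simp only [inner_sum, inner_smul_right, Finset.mul_sum, mul_neg]
  congr 1
  exact Finset.sum_congr rfl fun i _ => Finset.sum_congr rfl fun u _ => by ring

/-- Proposition 3.3 (weighted extended NTK evolution in multi-task learning):
along a gradient-flow trajectory for the weighted multi-task squared loss, the
rescaled task outputs ω_j · f_j evolve according to the weighted extended NTK
matrix ωωᵀ ⊙ K̃. -/
theorem ntk_mtl_weighted_gradient_flow_evolution
    (p k n : ℕ) (hp : 0 < p) (hk : 0 < k) (hn : 0 < n)
    (f : Fin k → Fin n → EuclideanSpace ℝ (Fin p) → ℝ)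
    (hf : ∀ i u, Differentiable ℝ (f i u))
    (y : Fin k → Fin n → ℝ)
    (ω : Fin k → ℝ)
    (θ : ℝ → EuclideanSpace ℝ (Fin p))
    (hθ : Differentiable ℝ θ)
    (hflow : ∀ t : ℝ, deriv θ t =
      -gradient (fun w => ∑ i, ω i * ∑ u, (1 / 2 : ℝ) * (f i u w - y i u) ^ 2) (θ t))
    (j : Fin k) (v : Fin n) (t : ℝ) :
    HasDerivAt (fun s => ω j * f j v (θ s))
      (-∑ i, ∑ u,
        ω j * ω i * ⟪gradient (f j v) (θ t), gradient (f i u) (θ t)⟫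
          * (f i u (θ t) - y i u)) t :=
  ntk_mtl_weighted_gradient_flow_evolution_general p k n f hf y ω θ hθ hflow j v t
end
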